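/- Let K = ℚ[s, Tb, Tc, Td] and let F be the free associative K-algebra on generators a, A, b, c, d. Let I be the two-sided ideal of F generated by b² − Tb, c² − Tc, d² − Td, Aa + b + c + d − s, and aA − 2s. In the quotient F/I, set x' = abcA, y = acA, z = abA, and E = y + z − Td + Tc + Tb + s². Then the identity x'·x' + 2s·E·x' = E·y·z − 4s²·Tb·Tc + Tb·y·y + Tc·z·z holds in F/I. -/

import Mathlib

noncomputable section
open MvPolynomial FreeAlgebra

/-- The coefficient ring `K = ℚ[s, Tb, Tc, Td]` with `s = X 0, Tb = X 1, Tc = X 2,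
Td = X 3`. -/
abbrev K16 : Type := MvPolynomial (Fin 4) ℚ

/-- The free associative `K`-algebra on `a = ι 0, A = ι 1, b = ι 2, c = ι 3, d = ι 4`. -/
abbrev F16 : Type := FreeAlgebra K16 (Fin 5)

/-- The relations `b² = Tb`, `c² = Tc`, `d² = Td`, `Aa + b + c + d = s`, `aA = 2s`. -/
inductive FlopRel : F16 → F16 → Prop
  | rb : FlopRel ((ι K16 (2 : Fin 5))^2) (algebraMap K16 F16 (X 1))
  | rc : FlopRel ((ι K16 (3 : Fin 5))^2) (algebraMap K16 F16 (X 2))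
  | rd : FlopRel ((ι K16 (4 : Fin 5))^2) (algebraMap K16 F16 (X 3))
  | rlin : FlopRel
      (ι K16 (1 : Fin 5) * ι K16 (0 : Fin 5) + ι K16 (2 : Fin 5) + ι K16 (3 : Fin 5) +
        ι K16 (4 : Fin 5)) (algebraMap K16 F16 (X 0))
  | raA : FlopRel (ι K16 (0 : Fin 5) * ι K16 (1 : Fin 5)) (2 * algebraMap K16 F16 (X 0))

/-- The universal flopping algebra of length 2 (with idempotents suppressed). -/
abbrev A16 : Type := RingQuot FlopRel

def π : F16 →ₐ[K16] A16 := RingQuot.mkAlgHom K16 FlopRel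

/-- `x' = abcA` -/
def x' : A16 := π (ι K16 0 * ι K16 2 * ι K16 3 * ι K16 1)
/-- `y = acA` -/
def y16 : A16 := π (ι K16 0 * ι K16 3 * ι K16 1)
/-- `z = abA` -/
def z16 : A16 := π (ι K16 0 * ι K16 2 * ι K16 1)

def s16 : A16 := algebraMap K16 A16 (X 0)
def Tb : A16 := algebraMap K16 A16 (X 1)
def Tc : A16 := algebraMap K16 A16 (X 2)
def Td : A16 := algebraMap K16 A16 (X 3)

/-- `E = y + z − Td + Tc + Tb + s²` -/
def E16 : A16 := y16 + z16 - Td + Tc + Tb + s16^2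


/-! Write `[w] = a w A`. As `Aa = s - b - c - d`, a product of sandwiches is a sandwich, and a `d`
inside a sandwich can be traded for `s - b - c` at the cost of a product:
`[u d v] = [u (s - b - c) v] - [u][v]`. Doing this twice in `Td [u v] = [u d² v]` gives a relation
among sandwiches of words in `b, c` alone. For `u = v = 1` it says `x' + x'' = -2sE`, where
`x'' = acbA`; for `(u, v) = (1, c), (c, 1)` it shows that `y` and `z` commute and that
`[cbc] = -Tc z - E y`; and the two reductions `(u, v) = (cb, c), (1, cbc)` of `[cbcbc]` give
`x'' x' = 4s²TbTc - Tb y² - Tc z² - E y z`. Hence `x'² + 2sEx' = (x' + 2sE) x' = -x'' x'`. -/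

section

variable {K R : Type*} [CommRing K] [Ring R] [Algebra K R]

structure FlopRelations (s tb tc td : K) (a A b c d : R) : Prop where
  b_sq : b ^ 2 = algebraMap K R tb
  c_sq : c ^ 2 = algebraMap K R tc
  d_sq : d ^ 2 = algebraMap K R td
  A_mul_a_add : A * a + b + c + d = algebraMap K R s
  a_mul_A : a * A = 2 * algebraMap K R s

variable (K) in
def sandwich (a A : R) : R →ₗ[K] R := LinearMap.mulLeft K a ∘ₗ LinearMap.mulRight K A

@[simp]
theorem sandwich_apply (a A u : R) : sandwich K a A u = a * (u * A) := rfl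

theorem sandwich_mul_sandwich (a A u v : R) :
    sandwich K a A u * sandwich K a A v = sandwich K a A (u * (A * a) * v) := by
  simp only [sandwich_apply, mul_assoc]

theorem mul_self_eq_smul_one_of_sq_eq {e : R} {t : K} (he : e ^ 2 = algebraMap K R t) :
    e * e = t • 1 := by
  rw [← sq, he, Algebra.algebraMap_eq_smul_one]

theorem mul_mul_eq_smul_of_sq_eq {e : R} {t : K} (he : e ^ 2 = algebraMap K R t) (x : R) :
    e * (e * x) = t • x := by
  rw [← mul_assoc, mul_self_eq_smul_one_of_sq_eq he, smul_mul_assoc, one_mul]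

namespace FlopRelations

variable {s tb tc td : K} {a A b c d : R}

local notation "σ" => sandwich K a A
local notation "E" => σ c + σ b + (s ^ 2 + tb + tc - td) • (1 : R)

theorem b_mul_b (h : FlopRelations s tb tc td a A b c d) : b * b = tb • 1 :=
  mul_self_eq_smul_one_of_sq_eq h.b_sq

theorem c_mul_c (h : FlopRelations s tb tc td a A b c d) : c * c = tc • 1 :=
  mul_self_eq_smul_one_of_sq_eq h.c_sq

theorem b_mul_b_mul (h : FlopRelations s tb tc td a A b c d) (x : R) : b * (b * x) = tb • x :=
  mul_mul_eq_smul_of_sq_eq h.b_sq x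

theorem c_mul_c_mul (h : FlopRelations s tb tc td a A b c d) (x : R) : c * (c * x) = tc • x :=
  mul_mul_eq_smul_of_sq_eq h.c_sq x

theorem sandwich_one (h : FlopRelations s tb tc td a A b c d) : σ 1 = (2 * s) • 1 := by
  rw [sandwich_apply, one_mul, h.a_mul_A, Algebra.smul_def, mul_one, map_mul, map_ofNat]

theorem sandwich_mul_d_mul (h : FlopRelations s tb tc td a A b c d) (u v : R) :
    σ (u * d * v) = σ (u * (s • 1 - b - c) * v) - σ u * σ v := by
  have hd : d = s • 1 - b - c - A * a := by
    rw [Algebra.smul_def, mul_one, ← h.A_mul_a_add]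
    abel
  rw [sandwich_mul_sandwich, ← map_sub, hd, mul_sub, sub_mul]

theorem smul_sandwich_mul (h : FlopRelations s tb tc td a A b c d) (u v : R) :
    td • σ (u * v) = σ (u * (s • 1 - b - c) * (s • 1 - b - c) * v)
      - σ (u * (s • 1 - b - c)) * σ v - σ u * σ ((s • 1 - b - c) * v)
      + (2 * s) • (σ u * σ v) := by
  have hdd : σ (u * d * (d * v)) = td • σ (u * v) := by
    rw [mul_assoc u, ← mul_assoc d, mul_self_eq_smul_one_of_sq_eq h.d_sq, smul_mul_assoc,
      one_mul, mul_smul_comm, map_smul]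
  have h1 := h.sandwich_mul_d_mul u (d * v)
  have h2 := h.sandwich_mul_d_mul (u * (s • 1 - b - c)) v
  have h3 := h.sandwich_mul_d_mul 1 v
  rw [← mul_assoc (u * (s • 1 - b - c)) d v] at h1
  rw [one_mul, one_mul, h.sandwich_one, smul_mul_assoc, one_mul] at h3
  rw [← hdd, h1, h2, h3, mul_sub (σ u), mul_smul_comm]
  abel

theorem sandwich_bc_add_sandwich_cb (h : FlopRelations s tb tc td a A b c d) :
    σ (b * c) + σ (c * b) = -(2 * s) • E := by
  have h11 := h.smul_sandwich_mul 1 1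
  simp only [map_sub, map_smul, mul_sub, sub_mul, smul_mul_assoc, mul_smul_comm, smul_smul,
    smul_sub, one_mul, mul_one, mul_assoc, h.b_mul_b, h.c_mul_c, h.sandwich_one] at h11
  linear_combination (norm := module) -h11

theorem commute_sandwich_c_sandwich_b (h : FlopRelations s tb tc td a A b c d) : Commute (σ c) (σ b) := by
  have h1c := h.smul_sandwich_mul 1 c
  have hc1 := h.smul_sandwich_mul c 1
  simp only [map_sub, map_smul, mul_sub, sub_mul, smul_mul_assoc, mul_smul_comm, smul_smul,
    smul_sub, one_mul, mul_one, mul_assoc, h.b_mul_b, h.c_mul_c, h.sandwich_one] at h1c hc1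
  show σ c * σ b = σ b * σ c
  linear_combination (norm := module) h1c - hc1

theorem sandwich_cbc (h : FlopRelations s tb tc td a A b c d) :
    σ (c * (b * c)) = -(tc • σ b) - E * σ c := by
  have h1c := h.smul_sandwich_mul 1 c
  simp only [map_sub, map_smul, mul_sub, sub_mul, smul_mul_assoc, mul_smul_comm, smul_smul,
    smul_sub, one_mul, mul_one, mul_assoc, h.b_mul_b, h.c_mul_c, h.sandwich_one] at h1c
  simp only [add_mul, smul_mul_assoc, one_mul]
  linear_combination (norm := module) -h1c

theorem sandwich_cb_mul_sandwich_bc (h : FlopRelations s tb tc td a A b c d) :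
    σ (c * b) * σ (b * c) = (4 * s ^ 2 * tb * tc) • 1 - tb • (σ c * σ c) - tc • (σ b * σ b)
      - E * σ c * σ b := by
  -- the two reductions of `σ (c * b * c * b * c)`
  have hcb_c := h.smul_sandwich_mul (c * b) c
  have h1_cbc := h.smul_sandwich_mul 1 (c * (b * c))
  simp only [map_sub, map_smul, mul_sub, sub_mul, smul_mul_assoc, mul_smul_comm, smul_smul,
    smul_sub, one_mul, mul_one, mul_assoc, h.b_mul_b, h.c_mul_c, h.b_mul_b_mul, h.c_mul_c_mul,
    h.sandwich_one] at hcb_c h1_cbc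
  rw [h.sandwich_cbc] at hcb_c h1_cbc
  have hcomm := h.commute_sandwich_c_sandwich_b.eq
  simp only [mul_add, add_mul, mul_sub, sub_mul, smul_mul_assoc, mul_smul_comm, one_mul, mul_assoc,
    neg_mul, mul_neg, smul_add, smul_sub, smul_neg] at hcb_c h1_cbc ⊢
  linear_combination (norm := module)
    h1_cbc - hcb_c + (s ^ 2 + tb - td) • hcomm + σ c * hcomm + σ b * hcomm

theorem hypersurface (h : FlopRelations s tb tc td a A b c d) :
    σ (b * c) * σ (b * c) + 2 * algebraMap K R s
        * (σ c + σ b - algebraMap K R td + algebraMap K R tc + algebraMap K R tb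
          + algebraMap K R s ^ 2) * σ (b * c)
      = (σ c + σ b - algebraMap K R td + algebraMap K R tc + algebraMap K R tb
          + algebraMap K R s ^ 2) * σ c * σ b
        - 4 * algebraMap K R s ^ 2 * algebraMap K R tb * algebraMap K R tc
        + algebraMap K R tb * σ c * σ c + algebraMap K R tc * σ b * σ b := by
  have hE : σ c + σ b - algebraMap K R td + algebraMap K R tc + algebraMap K R tb
      + algebraMap K R s ^ 2 = E := by
    rw [← map_pow]
    simp only [Algebra.algebraMap_eq_smul_one]
    module
  have hx : σ (b * c) + (2 * s) • E = -σ (c * b) := by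
    linear_combination (norm := module) h.sandwich_bc_add_sandwich_cb
  calc _ = (σ (b * c) + (2 * s) • E) * σ (b * c) := by
        rw [hE, add_mul, Algebra.smul_def (2 * s), map_mul (algebraMap K R), map_ofNat]
    _ = -(σ (c * b) * σ (b * c)) := by rw [hx, neg_mul]
    _ = _ := by
      rw [h.sandwich_cb_mul_sandwich_bc, hE]
      simp only [Algebra.smul_def, mul_one, map_mul (algebraMap K R), map_pow, map_ofNat, mul_assoc]
      abel

end FlopRelations

end

theorem flopRelations_π :
    FlopRelations (X 0 : K16) (X 1) (X 2) (X 3)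
      (π (ι K16 0)) (π (ι K16 1)) (π (ι K16 2)) (π (ι K16 3)) (π (ι K16 4)) where
  b_sq := by simpa only [π, map_pow, AlgHom.commutes] using RingQuot.mkAlgHom_rel K16 FlopRel.rb
  c_sq := by simpa only [π, map_pow, AlgHom.commutes] using RingQuot.mkAlgHom_rel K16 FlopRel.rc
  d_sq := by simpa only [π, map_pow, AlgHom.commutes] using RingQuot.mkAlgHom_rel K16 FlopRel.rd
  A_mul_a_add := by
    simpa only [π, map_add, map_mul, AlgHom.commutes] using RingQuot.mkAlgHom_rel K16 FlopRel.rlin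
  a_mul_A := by
    simpa only [π, map_mul, map_ofNat, AlgHom.commutes] using RingQuot.mkAlgHom_rel K16 FlopRel.raA

theorem hypersurface_relation :
    x' * x' + 2 * s16 * E16 * x'
      = E16 * y16 * z16 - 4 * s16^2 * Tb * Tc + Tb * y16 * y16 + Tc * z16 * z16 := by
  have key := flopRelations_π.hypersurface
  simp only [sandwich_apply, mul_assoc] at key
  simpa only [x', y16, z16, E16, s16, Tb, Tc, Td, map_mul, mul_assoc] using key

end
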